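/- For every integer n ≥ 3, the set (N(S_{(n,n)}, 2) ∩ M(n,n)) \ (N0(n,n) ∪ N2(n,n)) is non-empty and has Hausdorff dimension at least n − 1. -/

import Mathlib

open scoped BigOperators
open MeasureTheory

noncomputable section

/-- 1-based access into a vector `u ∈ ℝ^d`, with the convention that
out-of-range indices (including `0` and anything `> d`) give `0`. -/
def pad1 {d : ℕ} (u : Fin d → ℝ) (i : ℕ) : ℝ :=
  if h : 1 ≤ i ∧ i ≤ d then u ⟨i - 1, by omega⟩ else 0

/-- The lifted linear convolution map `S_{(m,n)} : ℝ^{m×n} → ℝ^{m+n-1}`,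
summing the entries of a matrix along its anti-diagonals. -/
def liftS (m n : ℕ) (W : Matrix (Fin m) (Fin n) ℝ) : Fin (m + n - 1) → ℝ :=
  fun l => ∑ k : Fin m, ∑ j : Fin n, if (k : ℕ) + (j : ℕ) = (l : ℕ) then W k j else 0

/-- Linear convolution `x ⋆ y ∈ ℝ^{m+n-1}` of `x ∈ ℝ^m` and `y ∈ ℝ^n`. -/
def conv {m n : ℕ} (x : Fin m → ℝ) (y : Fin n → ℝ) : Fin (m + n - 1) → ℝ :=
  fun l => ∑ k : Fin m, ∑ j : Fin n, if (k : ℕ) + (j : ℕ) = (l : ℕ) then x k * y j else 0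

/-- The rank-two null space `N(S_{(m,n)}, 2)`. -/
def rankTwoNull (m n : ℕ) : Set (Matrix (Fin m) (Fin n) ℝ) :=
  {Q | Q.rank ≤ 2 ∧ liftS m n Q = 0}

/-- The parametrized family `N0(m,n)`:
`Q(k,l) = u(k)·v(l−1) − u(k−1)·v(l)` (1-based, with zero-padding conventions). -/
def N0set (m n : ℕ) : Set (Matrix (Fin m) (Fin n) ℝ) :=
  {Q | ∃ (u : Fin (m - 1) → ℝ) (v : Fin (n - 1) → ℝ),
    ∀ (k : Fin m) (l : Fin n),
      Q k l = pad1 u ((k : ℕ) + 1) * pad1 v (l : ℕ) - pad1 u (k : ℕ) * pad1 v ((l : ℕ) + 1)}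

/-- The recursively defined family `N2(m,n)`:
`Q(k,l) = u₁(k)·v₁(l−1) + u₂(k−1)·v₂(l)` (1-based, with zero-padding conventions),
where `u₁v₁ᵀ + u₂v₂ᵀ ∈ N(S_{(m-1,n-1)}, 2) \ {0}`. -/
def N2set (m n : ℕ) : Set (Matrix (Fin m) (Fin n) ℝ) :=
  {Q | ∃ (u₁ u₂ : Fin (m - 1) → ℝ) (v₁ v₂ : Fin (n - 1) → ℝ),
    (Matrix.of fun i j => u₁ i * v₁ j + u₂ i * v₂ j) ∈ rankTwoNull (m - 1) (n - 1) ∧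
    (Matrix.of fun i j => u₁ i * v₁ j + u₂ i * v₂ j) ≠ (0 : Matrix (Fin (m - 1)) (Fin (n - 1)) ℝ) ∧
    ∀ (k : Fin m) (l : Fin n),
      Q k l = pad1 u₁ ((k : ℕ) + 1) * pad1 v₁ (l : ℕ) + pad1 u₂ (k : ℕ) * pad1 v₂ ((l : ℕ) + 1)}

/-- The exceptional set `M(m,n) = {Q ∈ N(S_{(m,n)}, 2) : Q(m,1) = 0 and Q(1,n) = 0}` (1-based). -/
def Mexc (m n : ℕ) (hm : 0 < m) (hn : 0 < n) : Set (Matrix (Fin m) (Fin n) ℝ) :=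
  {Q | Q ∈ rankTwoNull m n ∧ Q ⟨m - 1, by omega⟩ ⟨0, hn⟩ = 0 ∧ Q ⟨0, hm⟩ ⟨n - 1, by omega⟩ = 0}

/-- Identifiability of the pair `p = (x,y)` with respect to linear convolution
and the constraint set `K`. -/
def Identifiable {m n : ℕ} (K : Set ((Fin m → ℝ) × (Fin n → ℝ)))
    (p : (Fin m → ℝ) × (Fin n → ℝ)) : Prop :=
  ∀ q ∈ K, conv q.1 q.2 = conv p.1 p.2 →
    ∃ α : ℝ, α ≠ 0 ∧ q.1 = α • p.1 ∧ q.2 = (1 / α) • p.2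

/-- The quotient set `Q∼(w,d)`: pairs `(w*, γ) ∈ ℝ^{d-1} × [0, 2π)` with
`w(j) = w*(j)·cos γ − w*(j−1)·sin γ` for `1 ≤ j ≤ d` (1-based, zero-padding conventions). -/
def quotSet (d : ℕ) (w : Fin d → ℝ) : Set ((Fin (d - 1) → ℝ) × ℝ) :=
  {p | p.2 ∈ Set.Ico 0 (2 * Real.pi) ∧
    ∀ j : Fin d, w j = pad1 p.1 ((j : ℕ) + 1) * Real.cos p.2 - pad1 p.1 (j : ℕ) * Real.sin p.2}

/-- Matrices over `ℝ` carry the (product) metric space structure of `ℝ^{m×n}`. -/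
instance {m n : ℕ} : MetricSpace (Matrix (Fin m) (Fin n) ℝ) :=
  show MetricSpace (Fin m → Fin n → ℝ) from inferInstance

open Matrix

/-! Take `Q = e₂ vᵀ − v e₂ᵀ` (1-based) with `v(2) = 0`. It is skew-symmetric of rank at most
two, so every anti-diagonal sum vanishes, and `Q(n,1) = Q(1,n) = 0` because `e₂` vanishes at `1`
and `n`. The last row of a matrix in `N0(n,n)` is `−u(n−1)·v(l)`, and that of a matrix in
`N2(n,n)` is `u₂(n−1)·v₂(l)`; so `Q(n,1) = 0 ≠ Q(n,2) = −v(n)` forces `v(1) = 0` (resp.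
`v₂(1) = 0`), which in turn forces `Q(1,2) = 0` (resp. `Q(2,1) = 0`), whereas here
`Q(1,2) = −v(1)` and `Q(2,1) = v(1)`. The second row of `Q` is `v`, so `v ↦ Q` is antilipschitz,
and the open set of `v` with nonzero entries outside position `2` has dimension `n − 1`. -/

theorem pad1_zero {d : ℕ} (u : Fin d → ℝ) : pad1 u 0 = 0 := by
  simp [pad1]

theorem pad1_eq_zero_of_lt {d i : ℕ} (u : Fin d → ℝ) (h : d < i) : pad1 u i = 0 :=
  dif_neg (by omega)

theorem notMem_N0set {m n : ℕ} {Q : Matrix (Fin m) (Fin n) ℝ} (hm : 0 < m) (hn : 1 < n)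
    (h_corner : Q ⟨m - 1, by omega⟩ ⟨0, by omega⟩ = 0)
    (h_last : Q ⟨m - 1, by omega⟩ ⟨1, hn⟩ ≠ 0) (h_first : Q ⟨0, hm⟩ ⟨1, hn⟩ ≠ 0) :
    Q ∉ N0set m n := by
  rintro ⟨u, v, hQ⟩
  have hu_out : pad1 u (m - 1 + 1) = 0 := pad1_eq_zero_of_lt u (by omega)
  have hcorner := hQ ⟨m - 1, by omega⟩ ⟨0, by omega⟩
  have hlast := hQ ⟨m - 1, by omega⟩ ⟨1, hn⟩
  have hfirst := hQ ⟨0, hm⟩ ⟨1, hn⟩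
  simp only [hu_out, pad1_zero, zero_mul, zero_sub, zero_add] at hcorner hlast hfirst
  have hu : pad1 u (m - 1) ≠ 0 := fun h => h_last (by simp [hlast, h])
  have hv : pad1 v 1 = 0 := by simpa [hu, h_corner] using hcorner
  exact h_first (by simp [hfirst, hv])

theorem notMem_N2set {m n : ℕ} {Q : Matrix (Fin m) (Fin n) ℝ} (hm : 1 < m) (hn : 1 < n)
    (h_corner : Q ⟨m - 1, by omega⟩ ⟨0, by omega⟩ = 0)
    (h_last : Q ⟨m - 1, by omega⟩ ⟨1, hn⟩ ≠ 0)
    (h_second : Q ⟨1, hm⟩ ⟨0, by omega⟩ ≠ 0) :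
    Q ∉ N2set m n := by
  rintro ⟨u₁, u₂, v₁, v₂, -, -, hQ⟩
  have hu_out : pad1 u₁ (m - 1 + 1) = 0 := pad1_eq_zero_of_lt u₁ (by omega)
  have hcorner := hQ ⟨m - 1, by omega⟩ ⟨0, by omega⟩
  have hlast := hQ ⟨m - 1, by omega⟩ ⟨1, hn⟩
  have hsecond := hQ ⟨1, hm⟩ ⟨0, by omega⟩
  simp only [hu_out, pad1_zero, zero_mul, mul_zero, zero_add] at hcorner hlast hsecond
  have hu : pad1 u₂ (m - 1) ≠ 0 := fun h => h_last (by simp [hlast, h])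
  have hv : pad1 v₂ 1 = 0 := by simpa [hu, h_corner] using hcorner
  exact h_second (by simp [hsecond, hv])

theorem liftS_transpose {n : ℕ} (Q : Matrix (Fin n) (Fin n) ℝ) :
    liftS n n Qᵀ = liftS n n Q := by
  funext l
  simp only [liftS, transpose_apply]
  rw [Finset.sum_comm]
  simp only [add_comm]

theorem liftS_neg {m n : ℕ} (Q : Matrix (Fin m) (Fin n) ℝ) :
    liftS m n (-Q) = -liftS m n Q := by
  funext l
  simp only [liftS, Pi.neg_apply, Matrix.neg_apply, ← Finset.sum_neg_distrib, neg_ite, neg_zero]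

theorem liftS_eq_zero_of_transpose_eq_neg {n : ℕ} {Q : Matrix (Fin n) (Fin n) ℝ}
    (hQ : Qᵀ = -Q) : liftS n n Q = 0 := by
  have h : liftS n n Q = -liftS n n Q := by rw [← liftS_neg, ← hQ, liftS_transpose]
  exact self_eq_neg.mp h

def wedge {n : ℕ} (u v : Fin n → ℝ) : Matrix (Fin n) (Fin n) ℝ :=
  vecMulVec u v - vecMulVec v u

theorem wedge_transpose {n : ℕ} (u v : Fin n → ℝ) : (wedge u v)ᵀ = -wedge u v := by
  simp [wedge, transpose_vecMulVec]

theorem rank_wedge_le {n : ℕ} (u v : Fin n → ℝ) : (wedge u v).rank ≤ 2 := by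
  have hfactor : wedge u v = (of ![u, v])ᵀ * of ![v, -u] := by
    ext k l
    simp [wedge, vecMulVec_apply, mul_apply, Fin.sum_univ_two, sub_eq_add_neg]
  rw [hfactor]
  exact (rank_mul_le_left _ _).trans ((rank_le_card_width _).trans (by simp))

theorem wedge_mem_rankTwoNull {n : ℕ} (u v : Fin n → ℝ) : wedge u v ∈ rankTwoNull n n :=
  ⟨rank_wedge_le u v, liftS_eq_zero_of_transpose_eq_neg (wedge_transpose u v)⟩

theorem wedge_single_one_mem_diff {n : ℕ} (hn : 2 < n) {v : Fin n → ℝ}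
    (h_first : v ⟨0, by omega⟩ ≠ 0) (h_last : v ⟨n - 1, by omega⟩ ≠ 0) :
    wedge (Pi.single ⟨1, by omega⟩ 1) v ∈
      (rankTwoNull n n ∩ Mexc n n (by omega) (by omega)) \ (N0set n n ∪ N2set n n) := by
  set Q := wedge (Pi.single ⟨1, by omega⟩ 1) v
  have hQ : ∀ k l,
      Q k l = (if (k : ℕ) = 1 then v l else 0) - (if (l : ℕ) = 1 then v k else 0) := by
    intro k l
    simp [Q, wedge, vecMulVec_apply, Pi.single_apply, Fin.ext_iff]
  have hnull : Q ∈ rankTwoNull n n := wedge_mem_rankTwoNull _ v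
  have h_corner : Q ⟨n - 1, by omega⟩ ⟨0, by omega⟩ = 0 := by
    simp [hQ, show n - 1 ≠ 1 by omega]
  have h_corner' : Q ⟨0, by omega⟩ ⟨n - 1, by omega⟩ = 0 := by
    simp [hQ, show n - 1 ≠ 1 by omega]
  have h_last_row : Q ⟨n - 1, by omega⟩ ⟨1, by omega⟩ ≠ 0 := by
    simpa [hQ, show n - 1 ≠ 1 by omega] using h_last
  have h_first_row : Q ⟨0, by omega⟩ ⟨1, by omega⟩ ≠ 0 := by simpa [hQ] using h_first
  have h_second_row : Q ⟨1, by omega⟩ ⟨0, by omega⟩ ≠ 0 := by simpa [hQ] using h_first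
  refine ⟨⟨hnull, hnull, h_corner, h_corner'⟩, ?_⟩
  rintro (hN0 | hN2)
  · exact notMem_N0set (by omega) (by omega) h_corner h_last_row h_first_row hN0
  · exact notMem_N2set (by omega) (by omega) h_corner h_last_row h_second_row hN2

def wedgeInsertNth {m : ℕ} (i : Fin (m + 1)) (w : Fin m → ℝ) :
    Matrix (Fin (m + 1)) (Fin (m + 1)) ℝ :=
  wedge (Pi.single i 1) (Fin.insertNth i 0 w)

theorem wedgeInsertNth_apply_succAbove {m : ℕ} (i : Fin (m + 1)) (w : Fin m → ℝ) (j : Fin m) :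
    wedgeInsertNth i w i (i.succAbove j) = w j := by
  simp [wedgeInsertNth, wedge, vecMulVec_apply, Fin.succAbove_ne]

theorem antilipschitzWith_wedgeInsertNth {m : ℕ} (i : Fin (m + 1)) :
    AntilipschitzWith 1 (wedgeInsertNth i) := by
  have hrow : LipschitzWith 1
      fun (Q : Matrix (Fin (m + 1)) (Fin (m + 1)) ℝ) j => Q i (i.succAbove j) :=
    LipschitzWith.of_edist_le fun Q Q' => edist_pi_le_iff.mpr fun j =>
      (edist_le_pi_edist (Q i) (Q' i) _).trans (edist_le_pi_edist Q Q' i)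
  exact hrow.to_rightInverse fun w => funext (wedgeInsertNth_apply_succAbove i w)

/-- for `n ≥ 3`, `(N(S_{(n,n)}, 2) ∩ M(n,n)) \ (N0(n,n) ∪ N2(n,n))` is
non-empty of Hausdorff dimension at least `n − 1`. -/
theorem stmt6 (n : ℕ) (hn : 3 ≤ n) :
    ((rankTwoNull n n ∩ Mexc n n (by omega) (by omega)) \ (N0set n n ∪ N2set n n)).Nonempty ∧
    ((n - 1 : ℕ) : ENNReal) ≤
      dimH ((rankTwoNull n n ∩ Mexc n n (by omega) (by omega)) \ (N0set n n ∪ N2set n n)) := by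
  obtain ⟨m, rfl⟩ : ∃ m, n = m + 1 := ⟨n - 1, by omega⟩
  let O : Set (Fin m → ℝ) := Set.univ.pi fun _ => Set.Ioi 0
  have hO_open : IsOpen O := isOpen_set_pi Set.finite_univ fun _ _ => isOpen_Ioi
  have hO_nonempty : O.Nonempty := ⟨fun _ => 1, fun _ _ => Set.mem_Ioi.mpr one_pos⟩
  have himage : wedgeInsertNth ⟨1, by omega⟩ '' O ⊆
      (rankTwoNull (m + 1) (m + 1) ∩ Mexc (m + 1) (m + 1) (by omega) (by omega)) \
        (N0set (m + 1) (m + 1) ∪ N2set (m + 1) (m + 1)) := by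
    rintro _ ⟨w, hw, rfl⟩
    have hv : ∀ k, k ≠ ⟨1, by omega⟩ →
        (Fin.insertNth ⟨1, by omega⟩ 0 w : Fin (m + 1) → ℝ) k ≠ 0 := by
      intro k hk
      obtain ⟨j, rfl⟩ := Fin.exists_succAbove_eq hk
      rw [Fin.insertNth_apply_succAbove]
      exact (hw j (Set.mem_univ j)).ne'
    exact wedge_single_one_mem_diff hn (hv _ (by simp [Fin.ext_iff]))
      (hv _ (by simp [Fin.ext_iff]; omega))
  refine ⟨(hO_nonempty.image _).mono himage, ?_⟩
  calc ((m + 1 - 1 : ℕ) : ENNReal) = dimH O := by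
        rw [Real.dimH_of_nonempty_interior (by rwa [hO_open.interior_eq]), Module.finrank_fin_fun]
        simp
    _ ≤ dimH (wedgeInsertNth ⟨1, by omega⟩ '' O) :=
        (antilipschitzWith_wedgeInsertNth _).le_dimH_image O
    _ ≤ _ := dimH_mono himage
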